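/- arXiv:2310.10246 — 7 statements merged into one kernel-verified Lean document; each statement's English description precedes it below -/
import Mathlib

section
/- Let Λ₁ be a K₁-approximate subgroup and Λ₂ a K₂-approximate subgroup of a group G, and let k₁, k₂ ≥ 2 be integers. Then there is a finite set F ⊆ G with |F| ≤ K₁^{k₁−1}·K₂^{k₂−1} such that Λ₁^{k₁} ∩ Λ₂^{k₂} ⊆ F·(Λ₁² ∩ Λ₂²). -/
open Pointwise

def IsKApproxSubgroup {G : Type*} [Group G] (K : ℕ) (Λ : Set G) : Prop :=
  (1 : G) ∈ Λ ∧ Λ⁻¹ = Λ ∧ ∃ F : Finset G, F.card ≤ K ∧ Λ * Λ ⊆ ↑F * Λ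

lemma IsKApproxSubgroup.isApproximateSubgroup {G : Type*} [Group G] {K : ℕ} {Λ : Set G}
    (h : IsKApproxSubgroup K Λ) : IsApproximateSubgroup (K : ℝ) Λ := by
  obtain ⟨one_mem, inv_eq_self, F, hF, hΛF⟩ := h
  exact ⟨one_mem, inv_eq_self, F, mod_cast hF, by rwa [sq]⟩

theorem stmt1 {G : Type*} [Group G] (K₁ K₂ k₁ k₂ : ℕ) (Λ₁ Λ₂ : Set G)
    (hk₁ : 2 ≤ k₁) (hk₂ : 2 ≤ k₂)
    (h1 : IsKApproxSubgroup K₁ Λ₁) (h2 : IsKApproxSubgroup K₂ Λ₂) :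
    ∃ F : Finset G, F.card ≤ K₁ ^ (k₁ - 1) * K₂ ^ (k₂ - 1) ∧
      Λ₁ ^ k₁ ∩ Λ₂ ^ k₂ ⊆ ↑F * (Λ₁ ^ 2 ∩ Λ₂ ^ 2) := by
  obtain ⟨F, hF, hcover⟩ := h1.isApproximateSubgroup.pow_inter_pow_covBySMul_sq_inter_sq
    h2.isApproximateSubgroup hk₁ hk₂
  exact ⟨F, mod_cast hF, hcover⟩
end

section
/- If Λ₁ is a K₁-approximate subgroup and Λ₂ a K₂-approximate subgroup of a group G, and k₁, k₂ ≥ 2 are integers, then Λ₁^{k₁} ∩ Λ₂^{k₂} is a K₁^{2k₁−1}·K₂^{2k₂−1}-approximate subgroup of G. -/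
open Pointwise

theorem isKApproxSubgroup_iff_isApproximateSubgroup {G : Type*} [Group G] {K : ℕ} {Λ : Set G} :
    IsKApproxSubgroup K Λ ↔ IsApproximateSubgroup (K : ℝ) Λ := by
  have hcov_iff : (∃ F : Finset G, F.card ≤ K ∧ Λ * Λ ⊆ ↑F * Λ) ↔
      CovBySMul G (K : ℝ) (Λ ^ 2) Λ := by
    simp only [CovBySMul, Nat.cast_le, sq, smul_eq_mul]
  rw [IsKApproxSubgroup, hcov_iff]
  exact ⟨fun ⟨hone, hinv, hcov⟩ => ⟨hone, hinv, hcov⟩,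
    fun h => ⟨h.one_mem, h.inv_eq_self, h.sq_covBySMul⟩⟩

theorem stmt2 {G : Type*} [Group G] (K₁ K₂ k₁ k₂ : ℕ) (Λ₁ Λ₂ : Set G)
    (hk₁ : 2 ≤ k₁) (hk₂ : 2 ≤ k₂)
    (h1 : IsKApproxSubgroup K₁ Λ₁) (h2 : IsKApproxSubgroup K₂ Λ₂) :
    IsKApproxSubgroup (K₁ ^ (2 * k₁ - 1) * K₂ ^ (2 * k₂ - 1)) (Λ₁ ^ k₁ ∩ Λ₂ ^ k₂) := by
  rw [isKApproxSubgroup_iff_isApproximateSubgroup] at h1 h2 ⊢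
  push_cast
  exact h1.pow_inter_pow h2 hk₁ hk₂
end

section
/- Let X, Y₁, …, Yₙ be subsets of a group G and suppose there exist finite sets F₁, …, Fₙ ⊆ G with X ⊆ Fᵢ·Yᵢ for all i. Then there exists F′ ⊆ X with |F′| ≤ |F₁|·⋯·|Fₙ| such that X ⊆ F′·(Y₁⁻¹Y₁ ∩ ⋯ ∩ Yₙ⁻¹Yₙ). -/
/-!
For each `x ∈ X` choose `aᵢ ∈ Fᵢ` with `aᵢ⁻¹ x ∈ Yᵢ`. The tuple `(aᵢ)ᵢ` takes at most `∏ |Fᵢ|`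
values, and two points `x, x'` with the same tuple satisfy `x'⁻¹ x = (aᵢ⁻¹ x')⁻¹ (aᵢ⁻¹ x) ∈ Yᵢ⁻¹ Yᵢ`
for every `i`. So one representative of each fibre of `x ↦ (aᵢ)ᵢ` gives `F'`.
-/

open Pointwise

/-- Holds without finiteness: if some factor is infinite, both sides are `0`. -/
theorem Set.ncard_univ_pi {ι α : Type*} [Fintype ι] (s : ι → Set α) :
    (Set.univ.pi s).ncard = ∏ i, (s i).ncard := by
  simp only [← Nat.card_coe_set_eq, Nat.card_congr (Equiv.Set.univPi s), Nat.card_pi]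

theorem inv_mul_mem_inv_mul_of_inv_mul_mem {G : Type*} [Group G] {Y : Set G} {a x y : G}
    (hx : a⁻¹ * x ∈ Y) (hy : a⁻¹ * y ∈ Y) : y⁻¹ * x ∈ Y⁻¹ * Y :=
  ⟨_, Set.inv_mem_inv.2 hy, _, hx, by group⟩

theorem exists_factor_of_subset_mul {G ι : Type*} [Group G] {X : Set G} {Y F : ι → Set G}
    (hXF : ∀ i, X ⊆ F i * Y i) :
    ∃ f : G → ι → G, ∀ x ∈ X, ∀ i, f x i ∈ F i ∧ (f x i)⁻¹ * x ∈ Y i := by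
  have h : ∀ x i, ∃ a, x ∈ X → a ∈ F i ∧ a⁻¹ * x ∈ Y i := by
    intro x i
    by_cases hx : x ∈ X
    · obtain ⟨a, ha, y, hy, rfl⟩ := hXF i hx
      exact ⟨a, fun _ => ⟨ha, by simpa using hy⟩⟩
    · exact ⟨1, fun h => absurd h hx⟩
  choose f hf using h
  exact ⟨f, fun x hx i => hf x i hx⟩

theorem stmt4 {G : Type*} [Group G] (n : ℕ) (X : Set G) (Y F : Fin n → Set G)
    (hF : ∀ i, (F i).Finite) (hXF : ∀ i, X ⊆ F i * Y i) :
    ∃ F' : Set G, F' ⊆ X ∧ F'.Finite ∧ F'.ncard ≤ ∏ i, (F i).ncard ∧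
      X ⊆ F' * ⋂ i, (Y i)⁻¹ * Y i := by
  obtain ⟨f, hf⟩ := exists_factor_of_subset_mul hXF
  have hfX : f '' X ⊆ Set.univ.pi F := by
    rintro _ ⟨x, hx, rfl⟩ i -
    exact (hf x hx i).1
  have hpi : (Set.univ.pi F).Finite := Set.Finite.pi hF
  obtain ⟨F', hF'X, hbij⟩ := Set.exists_subset_bijOn X f
  refine ⟨F', hF'X, ?_, ?_, ?_⟩
  · exact Set.Finite.of_finite_image (hbij.image_eq ▸ hpi.subset hfX) hbij.injOn
  · calc F'.ncard = (f '' X).ncard := hbij.ncard_eq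
      _ ≤ (Set.univ.pi F).ncard := Set.ncard_le_ncard hfX hpi
      _ = ∏ i, (F i).ncard := Set.ncard_univ_pi F
  · intro x hx
    obtain ⟨x', hx', hfx'⟩ := hbij.surjOn ⟨x, hx, rfl⟩
    refine ⟨x', hx', x'⁻¹ * x, Set.mem_iInter.2 fun i => ?_, mul_inv_cancel_left x' x⟩
    have hx'Y := (hf x' (hF'X hx') i).2
    rw [hfx'] at hx'Y
    exact inv_mul_mem_inv_mul_of_inv_mul_mem (hf x hx i).2 hx'Y
end

section
/- Let Λ be a uniform approximate lattice in a locally compact group G and let H₁, H₂ be closed subgroups such that Λ² ∩ Hᵢ is a uniform approximate lattice in Hᵢ for i = 1, 2. Then Λ² ∩ H₁ ∩ H₂ is a uniform approximate lattice in H₁ ∩ H₂. -/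
open Pointwise

def IsApproxSubgroup {G : Type*} [Group G] (Λ : Set G) : Prop :=
  (1 : G) ∈ Λ ∧ Λ⁻¹ = Λ ∧ ∃ F : Set G, F.Finite ∧ Λ * Λ ⊆ F * Λ

def UniformlyDiscrete {G : Type*} [Group G] [TopologicalSpace G] (Λ : Set G) : Prop :=
  ∃ U ∈ nhds (1 : G), Λ⁻¹ * Λ ∩ U = {1}

/-- `Λ` is a uniform approximate lattice in the closed subset `H` of the ambient group. -/
def IsUniformApproxLatticeIn {G : Type*} [Group G] [TopologicalSpace G] (Λ H : Set G) : Prop :=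
  Λ ⊆ H ∧ IsApproxSubgroup Λ ∧ UniformlyDiscrete Λ ∧ ∃ K : Set G, IsCompact K ∧ H ⊆ Λ * K

/-!
Write `x ∈ H₁ ∩ H₂` as `x = l₁ c₁ = l₂ c₂` with `lᵢ ∈ Λ² ∩ Hᵢ` and `cᵢ ∈ Kᵢ`. Then
`l₂⁻¹ l₁ = c₂ c₁⁻¹` lies in `Λ⁴ ∩ K₂ K₁⁻¹`, a finite set because `Λ⁴` is covered by finitely
many translates of the uniformly discrete set `Λ`. Fixing for each such `t` one factorisation
`t = b⁻¹ a` with `a ∈ Λ² ∩ H₁`, `b ∈ Λ² ∩ H₂` gives `l₁ a⁻¹ = l₂ b⁻¹ ∈ Λ⁴ ∩ H₁ ∩ H₂` and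
`x ∈ (Λ⁴ ∩ H₁ ∩ H₂) a K₁`. Finally `Λ⁴ ∩ H` lies in finitely many translates of `Λ² ∩ H` for
any subgroup `H`: picking one point of `f Λ ∩ H` for each `f` in a finite `F` with `Λ⁴ ⊆ F Λ`
turns `F` into a finite set of translates inside `H`.
-/

open Set

namespace UniformlyDiscrete

variable {G : Type*} [Group G] [TopologicalSpace G] {Λ : Set G}

lemma mono {Λ' : Set G} (h : UniformlyDiscrete Λ) (hsub : Λ' ⊆ Λ) (hne : Λ'.Nonempty) :
    UniformlyDiscrete Λ' := by
  obtain ⟨U, hU, hΛU⟩ := h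
  obtain ⟨x, hx⟩ := hne
  refine ⟨U, hU, subset_antisymm ?_ ?_⟩
  · exact hΛU ▸ inter_subset_inter_left U (mul_subset_mul (inv_subset_inv.2 hsub) hsub)
  · rw [singleton_subset_iff]
    exact ⟨⟨x⁻¹, inv_mem_inv.2 hx, x, hx, inv_mul_cancel x⟩, mem_of_mem_nhds hU⟩

variable [IsTopologicalGroup G]

lemma finite_inter_compact {C : Set G} (h : UniformlyDiscrete Λ) (hC : IsCompact C) :
    (Λ ∩ C).Finite := by
  obtain ⟨U, hU, hΛU⟩ := h
  obtain ⟨V, hV, hVU⟩ := exists_nhds_split_inv hU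
  obtain ⟨t, -, hCt⟩ := hC.elim_nhds_subcover (fun x => x • V⁻¹)
    (fun x _ => smul_mem_nhds_self.2 (inv_mem_nhds_one G hV))
  have hcover : Λ ∩ C ⊆ ⋃ x ∈ t, Λ ∩ x • V⁻¹ := fun y ⟨hyΛ, hyC⟩ => by
    obtain ⟨x, hxt, hyx⟩ := mem_iUnion₂.1 (hCt hyC)
    exact mem_iUnion₂.2 ⟨x, hxt, hyΛ, hyx⟩
  refine (t.finite_toSet.biUnion fun x _ => Subsingleton.finite ?_).subset hcover
  -- `(x v⁻¹)⁻¹ (x w⁻¹) = v / w` lies in `U`, so two points of `Λ` in `x • V⁻¹` coincide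
  rintro _ ⟨ha, v, hv, rfl⟩ _ ⟨hb, w, hw, rfl⟩
  have hvw : (x • v)⁻¹ * (x • w) ∈ Λ⁻¹ * Λ ∩ U := by
    refine ⟨mul_mem_mul (inv_mem_inv.2 ha) hb, ?_⟩
    simpa [smul_eq_mul, mul_assoc, div_eq_mul_inv] using hVU _ (mem_inv.1 hv) _ (mem_inv.1 hw)
  rw [hΛU, mem_singleton_iff, inv_mul_eq_one] at hvw
  exact hvw

lemma finite_mul_inter_compact {F C : Set G} (h : UniformlyDiscrete Λ) (hF : F.Finite)
    (hC : IsCompact C) : (F * Λ ∩ C).Finite := by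
  refine (hF.biUnion fun f _ => (h.finite_inter_compact (hC.smul f⁻¹)).smul_set (a := f)).subset ?_
  rintro _ ⟨⟨f, hf, a, ha, rfl⟩, hfa⟩
  exact mem_iUnion₂.2 ⟨f, hf, a, ⟨ha, mem_inv_smul_set_iff.2 hfa⟩, rfl⟩

end UniformlyDiscrete

section Covering

variable {G : Type*} [Group G]

lemma inter_mul_inter_subgroup_subset (A B : Set G) (H : Subgroup G) :
    (A ∩ H) * (B ∩ H) ⊆ A * B ∩ H := by
  rintro _ ⟨a, ⟨ha, haH⟩, b, ⟨hb, hbH⟩, rfl⟩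
  exact ⟨mul_mem_mul ha hb, H.mul_mem haH hbH⟩

lemma exists_finite_mul_inter_subgroup_subset {F : Set G} (hF : F.Finite) (B : Set G)
    (H : Subgroup G) : ∃ F₀ : Set G, F₀.Finite ∧ F * B ∩ H ⊆ F₀ * (B⁻¹ * B ∩ H) := by
  set F' := {f ∈ F | (f • B ∩ H).Nonempty}
  have : Finite F' := (hF.subset (sep_subset _ _)).to_subtype
  choose z hz using fun f : F' => f.2.2
  refine ⟨range z, finite_range z, ?_⟩
  rintro _ ⟨⟨f, hf, b, hb, rfl⟩, hfb⟩
  have hf' : f ∈ F' := ⟨hf, f * b, ⟨b, hb, rfl⟩, hfb⟩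
  obtain ⟨⟨b', hb', hzf⟩, hzH⟩ := hz ⟨f, hf'⟩
  have hquot : b'⁻¹ * b = (z ⟨f, hf'⟩)⁻¹ * (f * b) := by
    rw [← show f * b' = z ⟨f, hf'⟩ from hzf]; group
  refine ⟨z ⟨f, hf'⟩, mem_range_self _, b'⁻¹ * b,
    ⟨mul_mem_mul (inv_mem_inv.2 hb') hb, hquot ▸ H.mul_mem (H.inv_mem hzH) hfb⟩, ?_⟩
  change z ⟨f, hf'⟩ * (b'⁻¹ * b) = f * b
  rw [hquot, mul_inv_cancel_left]

lemma exists_finite_inter_mul_inter_subset {A₁ A₂ K₁ K₂ : Set G}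
    (hT : (A₂⁻¹ * A₁ ∩ (K₂ * K₁⁻¹)).Finite) :
    ∃ M : Set G, M.Finite ∧ A₁ * K₁ ∩ (A₂ * K₂) ⊆ (A₁ * A₁⁻¹ ∩ (A₂ * A₂⁻¹)) * (M * K₁) := by
  have : Finite ↥(A₂⁻¹ * A₁ ∩ (K₂ * K₁⁻¹)) := hT.to_subtype
  choose b hb a ha hba using fun t : ↥(A₂⁻¹ * A₁ ∩ (K₂ * K₁⁻¹)) => mem_mul.1 t.2.1
  refine ⟨range a, finite_range a, ?_⟩
  rintro x ⟨⟨l₁, hl₁, c₁, hc₁, rfl⟩, ⟨l₂, hl₂, c₂, hc₂, hx⟩⟩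
  have hc : c₂ * c₁⁻¹ = l₂⁻¹ * l₁ := by
    rw [← inv_mul_eq_iff_eq_mul.2 hx.symm]; group
  set t : ↥(A₂⁻¹ * A₁ ∩ (K₂ * K₁⁻¹)) :=
    ⟨l₂⁻¹ * l₁, mul_mem_mul (inv_mem_inv.2 hl₂) hl₁, hc ▸ mul_mem_mul hc₂ (inv_mem_inv.2 hc₁)⟩
  have hlab : l₁ * (a t)⁻¹ = l₂ * b t := by
    have : b t * a t = l₂⁻¹ * l₁ := hba t
    rw [mul_inv_eq_iff_eq_mul, mul_assoc, this, mul_inv_cancel_left]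
  refine ⟨l₁ * (a t)⁻¹, ⟨mul_mem_mul hl₁ (inv_mem_inv.2 (ha t)), hlab ▸ mul_mem_mul hl₂ (hb t)⟩,
    a t * c₁, mul_mem_mul (mem_range_self t) hc₁, by group⟩

end Covering

namespace IsApproxSubgroup

variable {G : Type*} [Group G] {Λ : Set G}

lemma mul_self_inv (h : IsApproxSubgroup Λ) : (Λ * Λ)⁻¹ = Λ * Λ := by
  rw [mul_inv_rev, h.2.1]

lemma exists_finite_mul_self_mul_self_subset (h : IsApproxSubgroup Λ) :
    ∃ F : Set G, F.Finite ∧ Λ * Λ * (Λ * Λ) ⊆ F * Λ := by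
  obtain ⟨-, -, F, hF, hΛF⟩ := h
  refine ⟨F * (F * F), hF.mul (hF.mul hF), ?_⟩
  calc Λ * Λ * (Λ * Λ) ⊆ F * Λ * (Λ * Λ) := mul_subset_mul_right hΛF
    _ = F * (Λ * Λ * Λ) := by simp only [mul_assoc]
    _ ⊆ F * (F * Λ * Λ) := mul_subset_mul_left (mul_subset_mul_right hΛF)
    _ = F * (F * (Λ * Λ)) := by simp only [mul_assoc]
    _ ⊆ F * (F * (F * Λ)) := mul_subset_mul_left (mul_subset_mul_left hΛF)
    _ = F * (F * F) * Λ := by simp only [mul_assoc]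

lemma exists_finite_mul_self_mul_self_inter_subset (h : IsApproxSubgroup Λ) (H : Subgroup G) :
    ∃ F₀ : Set G, F₀.Finite ∧ Λ * Λ * (Λ * Λ) ∩ H ⊆ F₀ * (Λ * Λ ∩ H) := by
  obtain ⟨F, hF, hΛF⟩ := h.exists_finite_mul_self_mul_self_subset
  obtain ⟨F₀, hF₀, hcov⟩ := exists_finite_mul_inter_subgroup_subset hF Λ H
  rw [h.2.1] at hcov
  exact ⟨F₀, hF₀, (inter_subset_inter_left _ hΛF).trans hcov⟩

lemma exists_finite_mul_self_mul_self_inter_subset' (h : IsApproxSubgroup Λ) (H : Subgroup G) :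
    ∃ F₀ : Set G, F₀.Finite ∧ Λ * Λ * (Λ * Λ) ∩ H ⊆ (Λ * Λ ∩ H) * F₀ := by
  obtain ⟨F₀, hF₀, hcov⟩ := h.exists_finite_mul_self_mul_self_inter_subset H
  refine ⟨F₀⁻¹, hF₀.inv, ?_⟩
  simpa only [inter_inv, mul_inv_rev, h.2.1, inv_coe_set, ← mul_assoc]
    using inv_subset_inv.2 hcov

lemma mul_self_inter_subgroup (h : IsApproxSubgroup Λ) (H : Subgroup G) :
    IsApproxSubgroup (Λ * Λ ∩ H) := by
  obtain ⟨F₀, hF₀, hcov⟩ := h.exists_finite_mul_self_mul_self_inter_subset H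
  refine ⟨⟨by simpa using mul_mem_mul h.1 h.1, H.one_mem⟩, ?_, F₀, hF₀,
    (inter_mul_inter_subgroup_subset _ _ H).trans hcov⟩
  rw [inter_inv, h.mul_self_inv, inv_coe_set]

lemma mul_self_inter_mul_inv_subset (h : IsApproxSubgroup Λ) (H : Subgroup G) :
    (Λ * Λ ∩ H) * (Λ * Λ ∩ H)⁻¹ ⊆ Λ * Λ * (Λ * Λ) ∩ H := by
  rw [(h.mul_self_inter_subgroup H).2.1]
  exact inter_mul_inter_subgroup_subset _ _ H

lemma finite_mul_self_mul_self_inter_compact [TopologicalSpace G] [IsTopologicalGroup G]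
    {C : Set G} (h : IsApproxSubgroup Λ) (hd : UniformlyDiscrete Λ) (hC : IsCompact C) :
    (Λ * Λ * (Λ * Λ) ∩ C).Finite := by
  obtain ⟨F, hF, hΛF⟩ := h.exists_finite_mul_self_mul_self_subset
  exact (hd.finite_mul_inter_compact hF hC).subset (inter_subset_inter_left _ hΛF)

end IsApproxSubgroup

theorem stmt8_general {G : Type*} [Group G] [TopologicalSpace G] [IsTopologicalGroup G]
    (Λ : Set G) (H₁ H₂ : Subgroup G)
    (hΛ : IsUniformApproxLatticeIn Λ Set.univ)
    (h1 : IsUniformApproxLatticeIn (Λ * Λ ∩ (H₁ : Set G)) (H₁ : Set G))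
    (h2 : IsUniformApproxLatticeIn (Λ * Λ ∩ (H₂ : Set G)) (H₂ : Set G)) :
    IsUniformApproxLatticeIn (Λ * Λ ∩ ((H₁ : Set G) ∩ (H₂ : Set G)))
      ((H₁ : Set G) ∩ (H₂ : Set G)) := by
  obtain ⟨-, hΛa, hΛd, -⟩ := hΛ
  obtain ⟨-, -, hd₁, K₁, hK₁, hH₁⟩ := h1
  obtain ⟨-, -, -, K₂, hK₂, hH₂⟩ := h2
  obtain ⟨F, hF, hcov⟩ := hΛa.exists_finite_mul_self_mul_self_inter_subset' (H₁ ⊓ H₂)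
  obtain ⟨M, hM, hHM⟩ := exists_finite_inter_mul_inter_subset (A₁ := Λ * Λ ∩ H₁)
    (A₂ := Λ * Λ ∩ H₂) (K₁ := K₁) (K₂ := K₂) <| by
    refine (hΛa.finite_mul_self_mul_self_inter_compact hΛd (hK₂.mul hK₁.inv)).subset
      (inter_subset_inter_left _ ?_)
    rw [(hΛa.mul_self_inter_subgroup H₂).2.1]
    exact mul_subset_mul inter_subset_left inter_subset_left
  refine ⟨inter_subset_right, hΛa.mul_self_inter_subgroup (H₁ ⊓ H₂),
    hd₁.mono (inter_subset_inter_right _ inter_subset_left)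
      ⟨1, (hΛa.mul_self_inter_subgroup (H₁ ⊓ H₂)).1⟩,
    F * (M * K₁), hF.isCompact.mul (hM.isCompact.mul hK₁), ?_⟩
  calc (H₁ : Set G) ∩ H₂ ⊆ (Λ * Λ ∩ H₁) * K₁ ∩ ((Λ * Λ ∩ H₂) * K₂) := inter_subset_inter hH₁ hH₂
    _ ⊆ (Λ * Λ * (Λ * Λ) ∩ (H₁ ⊓ H₂ : Subgroup G)) * (M * K₁) := by
      refine hHM.trans (mul_subset_mul_right ?_)
      rw [Subgroup.coe_inf, inter_inter_distrib_left]
      exact inter_subset_inter (hΛa.mul_self_inter_mul_inv_subset H₁)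
        (hΛa.mul_self_inter_mul_inv_subset H₂)
    _ ⊆ (Λ * Λ ∩ (H₁ ⊓ H₂ : Subgroup G)) * F * (M * K₁) := mul_subset_mul_right hcov
    _ = _ := mul_assoc _ _ _

theorem stmt8 {G : Type*} [Group G] [TopologicalSpace G] [IsTopologicalGroup G]
    [LocallyCompactSpace G] (Λ : Set G) (H₁ H₂ : Subgroup G)
    (hH₁ : IsClosed (H₁ : Set G)) (hH₂ : IsClosed (H₂ : Set G))
    (hΛ : IsUniformApproxLatticeIn Λ Set.univ)
    (h1 : IsUniformApproxLatticeIn (Λ * Λ ∩ (H₁ : Set G)) (H₁ : Set G))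
    (h2 : IsUniformApproxLatticeIn (Λ * Λ ∩ (H₂ : Set G)) (H₂ : Set G)) :
    IsUniformApproxLatticeIn (Λ * Λ ∩ ((H₁ : Set G) ∩ (H₂ : Set G)))
      ((H₁ : Set G) ∩ (H₂ : Set G)) :=
  stmt8_general Λ H₁ H₂ hΛ h1 h2
end

section
/- If Λ₁ ⊆ Λ₂ are two approximate lattices in a locally compact second countable group G, then Λ₁ and Λ₂ are commensurable. -/
open Pointwise MeasureTheory

def SetCommensurable {G : Type*} [Group G] (X Y : Set G) : Prop :=
  ∃ F : Set G, F.Finite ∧ X ⊆ F * Y ∩ Y * F ∧ Y ⊆ F * X ∩ X * F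

def IsApproxLattice {G : Type*} [Group G] [TopologicalSpace G] [MeasurableSpace G]
    (μ : Measure G) (Λ : Set G) : Prop :=
  IsApproxSubgroup Λ ∧ UniformlyDiscrete Λ ∧
    ∃ F : Set G, MeasurableSet F ∧ μ F < ⊤ ∧ Λ * F = Set.univ

/-!
Since `Λ₂⁴` lies in finitely many left translates of the uniformly discrete set `Λ₂`, for a small
symmetric identity neighbourhood `V` the set `Q = Λ₂⁻¹ Λ₁ Λ₁⁻¹ Λ₂ ∩ V V⁻¹ ⊆ Λ₂⁴ ∩ V V⁻¹` is finite.
Take `M ⊆ Λ₂` maximal such that the sets `Λ₁⁻¹ m V` (`m ∈ M`) are pairwise disjoint. Maximality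
gives `Λ₂ ⊆ Λ₁ Λ₁⁻¹ M Q ⊆ Λ₁ T M Q` for a finite `T`. As for `M`: a point `x` lies in at most
`|Q|` of the translates `a⁻¹ m V` (`a ∈ Λ₁`, `m ∈ M`), so, as `Λ₁ F = G`,
`|M| μ V = μ (⋃ m V) ≤ ∑ₐ μ (a⁻¹ (⋃ m V) ∩ F) ≤ |Q| μ F < ∞`.
-/

open Set

namespace IsApproxSubgroup

variable {G : Type*} [Group G] {Λ : Set G}

lemma exists_finite_mul_subset_mul_of_subset (h : IsApproxSubgroup Λ) {X T : Set G}
    (hT : T.Finite) (hX : X ⊆ T * Λ) : ∃ T' : Set G, T'.Finite ∧ X * Λ ⊆ T' * Λ := by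
  obtain ⟨-, -, F, hF, hΛΛ⟩ := h
  refine ⟨T * F, hT.mul hF, ?_⟩
  calc X * Λ ⊆ T * Λ * Λ := mul_subset_mul_right hX
    _ = T * (Λ * Λ) := mul_assoc _ _ _
    _ ⊆ T * (F * Λ) := mul_subset_mul_left hΛΛ
    _ = T * F * Λ := (mul_assoc _ _ _).symm

lemma exists_finite_pow_succ_subset_mul (h : IsApproxSubgroup Λ) (n : ℕ) :
    ∃ T : Set G, T.Finite ∧ Λ ^ (n + 1) ⊆ T * Λ := by
  induction n with
  | zero => exact ⟨1, finite_one, by simp⟩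
  | succ n ih =>
    obtain ⟨T, hT, hsub⟩ := ih
    rw [pow_succ]
    exact h.exists_finite_mul_subset_mul_of_subset hT hsub

lemma exists_finite_mul_subset_mul_right (h : IsApproxSubgroup Λ) :
    ∃ T : Set G, T.Finite ∧ Λ * Λ ⊆ Λ * T := by
  obtain ⟨-, hinv, F, hF, hΛΛ⟩ := h
  refine ⟨F⁻¹, hF.inv, ?_⟩
  simpa [mul_inv_rev, hinv] using inv_subset_inv.mpr hΛΛ

end IsApproxSubgroup

/- `∩` and `*` both have precedence 70 and associate to the left, so the condition
`X ⊆ F * Y ∩ Y * F` in `SetCommensurable` reads `X ⊆ (F * Y ∩ Y) * F`. -/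
lemma setCommensurable_of_subset_of_subset_mul {G : Type*} [Group G] {X Y S : Set G}
    (hXY : X ⊆ Y) (hS : S.Finite) (hYX : Y ⊆ X * S) : SetCommensurable X Y := by
  have h1 : (1 : G) ∈ insert 1 S := mem_insert 1 S
  refine ⟨insert 1 S, hS.insert 1, fun x hx => ?_, fun y hy => ?_⟩
  · have hx' : x ∈ insert 1 S * Y ∩ Y := ⟨by simpa using mul_mem_mul h1 (hXY hx), hXY hx⟩
    simpa using mul_mem_mul hx' h1
  · obtain ⟨x, hx, s, hs, rfl⟩ := hYX hy
    exact mul_mem_mul ⟨by simpa using mul_mem_mul h1 hx, hx⟩ (mem_insert_of_mem 1 hs)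

lemma exists_pairwiseDisjoint_forall_inter_nonempty {α β : Type*} (X : Set α) (f : α → Set β) :
    ∃ M ⊆ X, M.PairwiseDisjoint f ∧ ∀ y ∈ X, (f y).Nonempty → ∃ m ∈ M, (f y ∩ f m).Nonempty := by
  obtain ⟨M, hM⟩ := zorn_subset {M | M ⊆ X ∧ M.PairwiseDisjoint f} fun c hc hchain =>
    ⟨⋃₀ c, ⟨sUnion_subset fun s hs => (hc hs).1,
      (pairwiseDisjoint_sUnion hchain.directedOn).mpr fun s hs => (hc hs).2⟩,
      fun _ => subset_sUnion_of_mem⟩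
  refine ⟨M, hM.prop.1, hM.prop.2, fun y hy hne => ?_⟩
  by_contra! hdisj
  have hyM : y ∉ M := fun hyM => hne.ne_empty (by simpa using hdisj y hyM)
  have hins : insert y M ∈ {M | M ⊆ X ∧ M.PairwiseDisjoint f} :=
    ⟨insert_subset hy hM.prop.1, hM.prop.2.insert fun m hm _ =>
      disjoint_iff_inter_eq_empty.mpr (hdisj m hm)⟩
  exact hyM (hM.2 hins (subset_insert y M) (mem_insert y M))

section Translates

variable {G : Type*} [Group G]

lemma encard_setOf_mul_mem_smul_le {Λ V X : Set G} {m : G} (hm : m ∈ X) (x : G) :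
    {a ∈ Λ | a * x ∈ m • V}.encard ≤ (X⁻¹ * (Λ * Λ⁻¹) * X ∩ (V * V⁻¹)).encard := by
  rcases eq_empty_or_nonempty {a ∈ Λ | a * x ∈ m • V} with h | ⟨a₀, ha₀, hx₀⟩
  · rw [h, encard_empty]
    exact bot_le
  obtain ⟨v₀, hv₀, hv₀x⟩ := mem_smul_set.mp hx₀
  refine encard_le_encard_of_injOn (f := fun a => m⁻¹ * (a * a₀⁻¹) * m) ?_ ?_
  · rintro a ⟨ha, hx⟩
    obtain ⟨v, hv, hvx⟩ := mem_smul_set.mp hx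
    rw [smul_eq_mul] at hvx hv₀x
    have hconj : m⁻¹ * (a * a₀⁻¹) * m = v * v₀⁻¹ := by
      rw [eq_mul_inv_of_mul_eq hvx.symm, eq_mul_inv_of_mul_eq hv₀x.symm]
      group
    refine ⟨mul_mem_mul (mul_mem_mul (inv_mem_inv.mpr hm) ?_) hm, ?_⟩
    · exact mul_mem_mul ha (inv_mem_inv.mpr ha₀)
    · simpa only [hconj] using mul_mem_mul hv (inv_mem_inv.mpr hv₀)
  · intro a _ b _ h
    simpa using h

lemma mem_mul_mul_of_inter_nonempty {Λ V : Set G} {y m : G}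
    (h : ((Λ⁻¹ * y • V) ∩ (Λ⁻¹ * m • V)).Nonempty) :
    y ∈ Λ * Λ⁻¹ * {m} * ({m⁻¹} * (Λ * Λ⁻¹) * {y} ∩ (V * V⁻¹)) := by
  obtain ⟨z, hzy, hzm⟩ := h
  obtain ⟨a, ha, _, ⟨v, hv, rfl⟩, rfl⟩ := hzy
  obtain ⟨b, hb, _, ⟨w, hw, rfl⟩, hab⟩ := hzm
  simp only [smul_eq_mul] at hab
  have hy : y = a⁻¹ * b * m * (w * v⁻¹) := by
    rw [show y = a⁻¹ * (a * (y * v)) * v⁻¹ by group, ← hab]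
    group
  have hq : w * v⁻¹ = m⁻¹ * (b⁻¹ * a) * y := by
    rw [show w = m⁻¹ * (b⁻¹ * (b * (m * w))) by group, hab]
    group
  have hqmem : w * v⁻¹ ∈ {m⁻¹} * (Λ * Λ⁻¹) * {y} ∩ (V * V⁻¹) :=
    ⟨hq ▸ mul_mem_mul (mul_mem_mul (mem_singleton _) (mul_mem_mul (mem_inv.mp hb) ha))
      (mem_singleton _), mul_mem_mul hw (inv_mem_inv.mpr hv)⟩
  have := mul_mem_mul (mul_mem_mul (mul_mem_mul (mem_inv.mp ha) hb) (mem_singleton m)) hqmem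
  rwa [← hy] at this

lemma exists_pairwiseDisjoint_subset_mul (Λ X : Set G) {V : Set G} (hΛ : (1 : G) ∈ Λ)
    (hV : (1 : G) ∈ V) :
    ∃ M ⊆ X, M.PairwiseDisjoint (fun m => Λ⁻¹ * m • V) ∧
      X ⊆ Λ * Λ⁻¹ * M * (X⁻¹ * (Λ * Λ⁻¹) * X ∩ (V * V⁻¹)) := by
  obtain ⟨M, hMX, hdisj, hmax⟩ :=
    exists_pairwiseDisjoint_forall_inter_nonempty X fun m => Λ⁻¹ * m • V
  refine ⟨M, hMX, hdisj, fun y hy => ?_⟩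
  have hyV : y ∈ Λ⁻¹ * y • V := by
    simpa using mul_mem_mul (inv_mem_inv.mpr hΛ) (smul_mem_smul_set (a := y) hV)
  obtain ⟨m, hm, hym⟩ := hmax y hy ⟨y, hyV⟩
  refine mem_of_mem_of_subset (mem_mul_mul_of_inter_nonempty hym) ?_
  gcongr
  · exact singleton_subset_iff.mpr hm
  · exact singleton_subset_iff.mpr (inv_mem_inv.mpr (hMX hm))
  · exact singleton_subset_iff.mpr hy

end Translates

namespace UniformlyDiscrete

variable {G : Type*} [Group G] [TopologicalSpace G] {Λ : Set G}

lemma exists_nhds_eq_of_inv_mul_mem (h : UniformlyDiscrete Λ) :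
    ∃ U ∈ nhds (1 : G), ∀ x ∈ Λ, ∀ y ∈ Λ, x⁻¹ * y ∈ U → x = y := by
  obtain ⟨U, hU, hΛU⟩ := h
  refine ⟨U, hU, fun x hx y hy hxy => ?_⟩
  have : x⁻¹ * y ∈ Λ⁻¹ * Λ ∩ U := ⟨mul_mem_mul (inv_mem_inv.mpr hx) hy, hxy⟩
  rw [hΛU, mem_singleton_iff, inv_mul_eq_one] at this
  exact this

lemma discreteTopology [ContinuousMul G] (h : UniformlyDiscrete Λ) : DiscreteTopology Λ := by
  obtain ⟨U, hU, hΛU⟩ := h.exists_nhds_eq_of_inv_mul_mem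
  obtain ⟨U', hU'U, hU'open, hU'1⟩ := mem_nhds_iff.mp hU
  refine discreteTopology_subtype_iff'.mpr fun x hx => ⟨x • U', hU'open.smul x, ?_⟩
  apply subset_antisymm
  · rintro _ ⟨hyU, hyΛ⟩
    obtain ⟨u, hu, rfl⟩ := mem_smul_set.mp hyU
    exact (hΛU x hx _ hyΛ (by simpa using hU'U hu)).symm
  · rw [singleton_subset_iff]
    exact ⟨by simpa using smul_mem_smul_set (a := x) hU'1, hx⟩

lemma countable [ContinuousMul G] [SecondCountableTopology G] (h : UniformlyDiscrete Λ) :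
    Λ.Countable :=
  have := h.discreteTopology
  countable_coe_iff.mp (TopologicalSpace.separableSpace_iff_countable.mp inferInstance)

lemma exists_nhds_finite_mul_inter [IsTopologicalGroup G] (h : UniformlyDiscrete Λ) :
    ∃ W ∈ nhds (1 : G), ∀ T : Set G, T.Finite → (T * Λ ∩ W).Finite := by
  obtain ⟨U, hU, hΛU⟩ := h.exists_nhds_eq_of_inv_mul_mem
  obtain ⟨W, hW, -, hWinv, hWW⟩ := exists_closed_nhds_one_inv_eq_mul_subset hU
  refine ⟨W, hW, fun T hT => ?_⟩
  rw [← iUnion_mul_left_image, iUnion₂_inter]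
  refine hT.biUnion fun t _ => Subsingleton.finite ?_
  rintro _ ⟨⟨x, hxΛ, rfl⟩, hxW⟩ _ ⟨⟨y, hyΛ, rfl⟩, hyW⟩
  have hxy : (t * x)⁻¹ * (t * y) ∈ U := hWW (mul_mem_mul (by rwa [← hWinv, inv_mem_inv]) hyW)
  rw [hΛU x hxΛ y hyΛ (by simpa [mul_assoc] using hxy)]

end UniformlyDiscrete

section Packing

open scoped ENNReal

variable {G : Type*} [Group G] [MeasurableSpace G] (μ : Measure G)

lemma measure_le_tsum_measure_inv_smul_inter [μ.IsMulLeftInvariant] {Λ F : Set G} (hΛ : Λ.Countable)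
    (hcov : Λ * F = univ) (S : Set G) : μ S ≤ ∑' a : Λ, μ ((a : G)⁻¹ • S ∩ F) := by
  have := hΛ.to_subtype
  calc μ S ≤ μ (⋃ a : Λ, S ∩ (a : G) • F) := measure_mono fun x hx => by
        obtain ⟨a, ha, f, hf, rfl⟩ : x ∈ Λ * F := hcov ▸ mem_univ x
        exact mem_iUnion.mpr ⟨⟨a, ha⟩, hx, smul_mem_smul_set hf⟩
    _ ≤ ∑' a : Λ, μ (S ∩ (a : G) • F) := measure_iUnion_le _
    _ = ∑' a : Λ, μ ((a : G)⁻¹ • S ∩ F) := by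
        refine tsum_congr fun a => ?_
        rw [← measure_smul μ (a : G)⁻¹, smul_set_inter, inv_smul_smul]

lemma tsum_measure_inv_smul_inter_le [MeasurableMul G] {Λ F S : Set G} (hΛ : Λ.Countable)
    (hF : MeasurableSet F) (hS : MeasurableSet S) {N : ℕ∞} (hN : ∀ x ∈ F, {a ∈ Λ | a * x ∈ S}.encard ≤ N) :
    ∑' a : Λ, μ ((a : G)⁻¹ • S ∩ F) ≤ N * μ F := by
  have := hΛ.to_subtype
  have hmeas (a : Λ) : MeasurableSet ((a : G)⁻¹ • S ∩ F) := (hS.const_smul _).inter hF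
  calc ∑' a : Λ, μ ((a : G)⁻¹ • S ∩ F)
      = ∫⁻ x, ∑' a : Λ, ((a : G)⁻¹ • S ∩ F).indicator 1 x ∂μ := by
        rw [lintegral_tsum fun a => (measurable_one.indicator (hmeas a)).aemeasurable]
        simp_rw [lintegral_indicator_one (hmeas _)]
    _ ≤ ∫⁻ x, F.indicator (fun _ => (N : ℝ≥0∞)) x ∂μ := lintegral_mono fun x => ?_
    _ = N * μ F := lintegral_indicator_const hF _
  by_cases hx : x ∈ F
  · have hcount : ∑' a : Λ, ((a : G)⁻¹ • S ∩ F).indicator 1 x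
        = ∑' a : {a ∈ Λ | a * x ∈ S}, (1 : ℝ≥0∞) := by
      rw [tsum_subtype Λ (fun a => (a⁻¹ • S ∩ F).indicator 1 x),
        tsum_subtype {a ∈ Λ | a * x ∈ S} (fun _ => 1)]
      refine tsum_congr fun a => ?_
      by_cases ha : a ∈ Λ <;> by_cases haS : a * x ∈ S <;>
        simp [ha, haS, hx, mem_inv_smul_set_iff]
    rw [hcount, ENNReal.tsum_set_one, indicator_of_mem hx]
    exact ENat.toENNReal_le.mpr (hN x hx)
  · simp [hx]

lemma encard_mul_measure_le [MeasurableMul G] [μ.IsMulLeftInvariant] {Λ F V M : Set G} {N : ℕ∞}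
    (hΛ : Λ.Countable) (hΛ1 : (1 : G) ∈ Λ) (hcov : Λ * F = univ) (hF : MeasurableSet F)
    (hV : MeasurableSet V) (hM : M.Countable) (hdisj : M.PairwiseDisjoint fun m => Λ⁻¹ * m • V)
    (hmult : ∀ m ∈ M, ∀ x, {a ∈ Λ | a * x ∈ m • V}.encard ≤ N) :
    M.encard * μ V ≤ N * μ F := by
  have hmV (m : G) : MeasurableSet (m • V) := hV.const_smul m
  have hdisjV : M.PairwiseDisjoint (· • V) :=
    hdisj.mono fun m => subset_mul_right _ (by simpa using hΛ1)
  have hmultS (x : G) : {a ∈ Λ | a * x ∈ ⋃ m ∈ M, m • V}.encard ≤ N := by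
    rcases eq_empty_or_nonempty {a ∈ Λ | a * x ∈ ⋃ m ∈ M, m • V} with h | ⟨a₀, ha₀, hx₀⟩
    · rw [h, encard_empty]
      exact bot_le
    obtain ⟨m₀, hm₀, hx₀⟩ := mem_iUnion₂.mp hx₀
    have hsub : {a ∈ Λ | a * x ∈ ⋃ m ∈ M, m • V} ⊆ {a ∈ Λ | a * x ∈ m₀ • V} := by
      rintro a ⟨ha, hx⟩
      obtain ⟨m, hm, hx⟩ := mem_iUnion₂.mp hx
      have hmem {b n : G} (hb : b ∈ Λ) (h : b * x ∈ n • V) : x ∈ Λ⁻¹ * n • V := by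
        simpa using mul_mem_mul (inv_mem_inv.mpr hb) h
      exact ⟨ha, hdisj.elim_set hm hm₀ x (hmem ha hx) (hmem ha₀ hx₀) ▸ hx⟩
    exact (encard_le_encard hsub).trans (hmult m₀ hm₀ x)
  calc M.encard * μ V = μ (⋃ m ∈ M, m • V) := by
        rw [measure_biUnion hM hdisjV fun m _ => hmV m]
        simp only [measure_smul, ENNReal.tsum_set_const]
    _ ≤ ∑' a : Λ, μ ((a : G)⁻¹ • (⋃ m ∈ M, m • V) ∩ F) :=
        measure_le_tsum_measure_inv_smul_inter μ hΛ hcov _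
    _ ≤ N * μ F := tsum_measure_inv_smul_inter_le μ hΛ hF (.biUnion hM fun m _ => hmV m)
        fun x _ => hmultS x

lemma finite_of_pairwiseDisjoint_inv_mul_smul [MeasurableMul G] [μ.IsMulLeftInvariant]
    {Λ F V M : Set G} {N : ℕ∞} (hΛ : Λ.Countable) (hΛ1 : (1 : G) ∈ Λ) (hcov : Λ * F = univ)
    (hF : MeasurableSet F) (hμF : μ F ≠ ∞) (hV : MeasurableSet V) (hμV : μ V ≠ 0)
    (hM : M.Countable) (hdisj : M.PairwiseDisjoint fun m => Λ⁻¹ * m • V)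
    (hmult : ∀ m ∈ M, ∀ x, {a ∈ Λ | a * x ∈ m • V}.encard ≤ N) (hN : N ≠ ⊤) : M.Finite := by
  have hbound := encard_mul_measure_le μ hΛ hΛ1 hcov hF hV hM hdisj hmult
  have hfin : (M.encard : ℝ≥0∞) * μ V ≠ ∞ :=
    (hbound.trans_lt (ENNReal.mul_lt_top (by simpa using hN.lt_top) hμF.lt_top)).ne
  exact encard_ne_top_iff.mp (by simpa using ENNReal.lt_top_of_mul_ne_top_left hfin hμV |>.ne)

end Packing

theorem stmt9_general {G : Type*} [Group G] [TopologicalSpace G] [IsTopologicalGroup G]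
    [SecondCountableTopology G]
    [MeasurableSpace G] [BorelSpace G] (μ : Measure G) [μ.IsHaarMeasure]
    (Λ₁ Λ₂ : Set G) (hsub : Λ₁ ⊆ Λ₂)
    (h1 : IsApproxLattice μ Λ₁) (h2 : IsApproxLattice μ Λ₂) :
    SetCommensurable Λ₁ Λ₂ := by
  obtain ⟨hΛ₁, -, F, hF, hμF, hcov⟩ := h1
  obtain ⟨hΛ₂, hΛ₂d, -⟩ := h2
  obtain ⟨W, hW, hWfin⟩ := hΛ₂d.exists_nhds_finite_mul_inter
  obtain ⟨V, hV, hVc, hVinv, hVW⟩ := exists_closed_nhds_one_inv_eq_mul_subset hW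
  set Q := Λ₂⁻¹ * (Λ₁ * Λ₁⁻¹) * Λ₂ ∩ (V * V⁻¹)
  have hQ : Q.Finite := by
    obtain ⟨T, hT, hΛ₂T⟩ := hΛ₂.exists_finite_pow_succ_subset_mul 3
    refine (hWfin T hT).subset (inter_subset_inter (subset_trans ?_ hΛ₂T) (by rwa [hVinv]))
    rw [hΛ₁.2.1, hΛ₂.2.1, pow_succ, pow_succ, pow_succ, pow_one, ← mul_assoc]
    gcongr
  obtain ⟨M, hMΛ₂, hMdisj, hΛ₂M⟩ :=
    exists_pairwiseDisjoint_subset_mul Λ₁ Λ₂ hΛ₁.1 (mem_of_mem_nhds hV)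
  have hMfin : M.Finite :=
    finite_of_pairwiseDisjoint_inv_mul_smul μ (hΛ₂d.countable.mono hsub) hΛ₁.1 hcov hF hμF.ne
      hVc.measurableSet (Measure.measure_pos_of_mem_nhds μ hV).ne' (hΛ₂d.countable.mono hMΛ₂)
      hMdisj (fun m hm => encard_setOf_mul_mem_smul_le (hMΛ₂ hm)) hQ.encard_lt_top.ne
  obtain ⟨T, hT, hΛ₁Λ₁⟩ := hΛ₁.exists_finite_mul_subset_mul_right
  refine setCommensurable_of_subset_of_subset_mul hsub ((hT.mul hMfin).mul hQ) (hΛ₂M.trans ?_)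
  calc Λ₁ * Λ₁⁻¹ * M * Q ⊆ Λ₁ * T * M * Q :=
        mul_subset_mul_right (mul_subset_mul_right (by rwa [hΛ₁.2.1]))
    _ = Λ₁ * (T * M * Q) := by simp only [mul_assoc]

theorem stmt9 {G : Type*} [Group G] [TopologicalSpace G] [IsTopologicalGroup G]
    [LocallyCompactSpace G] [SecondCountableTopology G]
    [MeasurableSpace G] [BorelSpace G] (μ : Measure G) [μ.IsHaarMeasure]
    (Λ₁ Λ₂ : Set G) (hsub : Λ₁ ⊆ Λ₂)
    (h1 : IsApproxLattice μ Λ₁) (h2 : IsApproxLattice μ Λ₂) :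
    SetCommensurable Λ₁ Λ₂ :=
  stmt9_general μ Λ₁ Λ₂ hsub h1 h2
end

section
/- Let Γ be a group, Λ an approximate subgroup of Γ, and f : Γ → H a good model of (Λ, Γ) with H locally compact. Then the graph Γ_f = {(γ, f(γ)) : γ ∈ Γ}, viewed inside G × H when Γ is a uniformly discrete approximate subgroup of a locally compact group G containing Λ with Γ = ⟨Λ⟩, is a discrete subgroup of G × H. -/
open Pointwise Topology

/-- `f` is a good model of the approximate subgroup `Λ` of `Γ`. -/
def IsGoodModel {Γ H : Type*} [Group Γ] [Group H] [TopologicalSpace H]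
    (Λ : Set Γ) (f : Γ →* H) : Prop :=
  IsCompact (closure (f '' Λ)) ∧ ∃ U ∈ nhds (1 : H), f ⁻¹' U ⊆ Λ

theorem Subgroup.discreteTopology_of_inter_subset_one {G : Type*} [Group G]
    [TopologicalSpace G] [IsTopologicalGroup G] {S : Subgroup G} {U : Set G}
    (hU : U ∈ 𝓝 1) (hSU : (S : Set G) ∩ U ⊆ {1}) : DiscreteTopology S := by
  refine discreteTopology_of_isOpen_singleton_one
    (isOpen_induced_iff.mpr ⟨interior U, isOpen_interior, ?_⟩)
  ext x
  refine ⟨fun hx => Subtype.ext (hSU ⟨x.2, interior_subset hx⟩), ?_⟩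
  rintro rfl
  exact mem_interior_iff_mem_nhds.mpr hU

theorem UniformlyDiscrete.exists_inter_subset_one {G : Type*} [Group G] [TopologicalSpace G]
    {Λ : Set G} (hΛ : UniformlyDiscrete Λ) (h1 : (1 : G) ∈ Λ) :
    ∃ U ∈ 𝓝 (1 : G), Λ ∩ U ⊆ {1} := by
  obtain ⟨U, hU, hΛU⟩ := hΛ
  refine ⟨U, hU, hΛU ▸ Set.inter_subset_inter_left U ?_⟩
  exact Set.subset_mul_right _ (by simpa using h1)

theorem stmt14_general {G H : Type*} [Group G] [TopologicalSpace G] [IsTopologicalGroup G]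
    [Group H] [TopologicalSpace H] [IsTopologicalGroup H]
    (Λ : Set G) (hΛ : IsApproxSubgroup Λ) (hud : UniformlyDiscrete Λ)
    (Γ : Subgroup G)
    (f : Γ →* H) (hf : IsGoodModel {x : Γ | (x : G) ∈ Λ} f) :
    DiscreteTopology ((Γ.subtype.prod f).range : Subgroup (G × H)) := by
  obtain ⟨U, hU, hΛU⟩ := hud.exists_inter_subset_one hΛ.1
  obtain ⟨-, V, hV, hVΛ⟩ := hf
  refine Subgroup.discreteTopology_of_inter_subset_one (prod_mem_nhds hU hV) ?_
  rintro _ ⟨⟨γ, rfl⟩, hγU, hγV⟩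
  have hγ : γ = 1 := Subtype.ext (hΛU ⟨hVΛ hγV, hγU⟩)
  simp [hγ]

theorem stmt14 {G H : Type*} [Group G] [TopologicalSpace G] [IsTopologicalGroup G]
    [LocallyCompactSpace G] [Group H] [TopologicalSpace H] [IsTopologicalGroup H]
    [LocallyCompactSpace H]
    (Λ : Set G) (hΛ : IsApproxSubgroup Λ) (hud : UniformlyDiscrete Λ)
    (Γ : Subgroup G) (hΓ : Γ = Subgroup.closure Λ)
    (f : Γ →* H) (hf : IsGoodModel {x : Γ | (x : G) ∈ Λ} f) :
    DiscreteTopology ((Γ.subtype.prod f).range : Subgroup (G × H)) :=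
  stmt14_general Λ hΛ hud Γ f hf
end

section
/- Let G be a group, Λ and Λ_N approximate subgroups of G such that every λ ∈ Λ satisfies: λΛ_Nλ⁻¹ is commensurable with Λ_N, and ⋃_{λ∈Λ} λΛ_Nλ⁻¹ is commensurable with Λ_N. Then for every k ≥ 1, ⋃_{λ∈Λ^k} λΛ_Nλ⁻¹ is commensurable with Λ_N. -/
/-!
Call `g` a right almost-normaliser of `Λ_N` if `g Λ_N g⁻¹ ⊆ Λ_N C` for some finite `C`; these
elements form a submonoid, and by the union hypothesis it contains `Λ`. Since `Λ² ⊆ FΛ` with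
`F ⊆ Λ³` finite, `Λ^k ⊆ F^(k-1) Λ`, and every element of `F^(k-1)` almost normalises `Λ_N`. Hence
conjugating `Λ_N` by `eλ` with `e ∈ F^(k-1)`, `λ ∈ Λ` lands in `e (Λ_N F₀) e⁻¹ ⊆ Λ_N C_e (e F₀ e⁻¹)`,
and the finitely many `e` give one finite set `D` with `⋃_{l ∈ Λ^k} l Λ_N l⁻¹ ⊆ Λ_N D`.
-/

open Pointwise

lemma Set.Finite.pow {M : Type*} [Monoid M] {s : Set M} (hs : s.Finite) : ∀ n : ℕ, (s ^ n).Finite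
  | 0 => by simp
  | n + 1 => by rw [pow_succ]; exact (hs.pow n).mul hs

section

variable {G : Type*} [Group G]

-- `F * Y ∩ Y * F` in `SetCommensurable` parses as `(F * Y ∩ Y) * F`.
lemma SetCommensurable.exists_subset_mul {X Y : Set G} (h : SetCommensurable X Y) :
    ∃ F : Set G, F.Finite ∧ X ⊆ Y * F := by
  obtain ⟨F, hF, hXY, -⟩ := h
  exact ⟨F, hF, hXY.trans (Set.mul_subset_mul_right Set.inter_subset_right)⟩

lemma setCommensurable_of_subset_of_subset_mul_s17 {X Y D : Set G} (hD : D.Finite) (hYX : Y ⊆ X)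
    (hXY : X ⊆ Y * D) : SetCommensurable X Y := by
  have h1 : (1 : G) ∈ D ∪ {1} := Or.inr rfl
  refine ⟨D ∪ {1}, hD.union (Set.finite_singleton 1), fun x hx => ?_, fun y hy => ?_⟩
  · obtain ⟨y, hy, d, hd, rfl⟩ := hXY hx
    exact Set.mul_mem_mul ⟨⟨1, h1, y, hy, one_mul y⟩, hy⟩ (Or.inl hd)
  · exact ⟨y, ⟨⟨1, h1, y, hYX hy, one_mul y⟩, hYX hy⟩, 1, h1, mul_one y⟩

lemma conj_image_mul (g : G) (s t : Set G) :
    (fun x => g * x * g⁻¹) '' (s * t) =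
      (fun x => g * x * g⁻¹) '' s * (fun x => g * x * g⁻¹) '' t :=
  Set.image_mul (MulAut.conj g)

lemma conj_mul_image (g h : G) (A : Set G) :
    (fun x => g * h * x * (g * h)⁻¹) '' A =
      (fun x => g * x * g⁻¹) '' ((fun x => h * x * h⁻¹) '' A) := by
  rw [Set.image_image]; simp only [mul_inv_rev, mul_assoc]

lemma conj_image_mul_subset {g : G} {A C : Set G} (h : (fun x => g * x * g⁻¹) '' A ⊆ A * C)
    (B : Set G) :
    (fun x => g * x * g⁻¹) '' (A * B) ⊆ A * (C * (fun x => g * x * g⁻¹) '' B) := by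
  rw [conj_image_mul, ← mul_assoc]
  exact Set.mul_subset_mul_right h

def rightAlmostNormalizer (A : Set G) : Submonoid G where
  carrier := {g | ∃ C : Set G, C.Finite ∧ (fun x => g * x * g⁻¹) '' A ⊆ A * C}
  one_mem' := ⟨1, Set.finite_one, by simp⟩
  mul_mem' := by
    rintro g h ⟨Cg, hCg, hg⟩ ⟨Ch, hCh, hh⟩
    refine ⟨Cg * (fun x => g * x * g⁻¹) '' Ch, hCg.mul (hCh.image _), ?_⟩
    rw [conj_mul_image]
    exact (Set.image_mono hh).trans (conj_image_mul_subset hg Ch)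

lemma IsApproxSubgroup.exists_finite_sq_subset_mul {Λ : Set G} (hΛ : IsApproxSubgroup Λ)
    {M : Submonoid G} (hΛM : Λ ⊆ M) : ∃ F : Set G, F.Finite ∧ F ⊆ M ∧ Λ ^ 2 ⊆ F * Λ := by
  obtain ⟨-, hinv, F, hF, hsq⟩ := hΛ
  refine ⟨F ∩ M, hF.inter_of_left _, Set.inter_subset_right, fun x hx => ?_⟩
  rw [sq] at hx
  obtain ⟨f, hf, l, hl, rfl⟩ := hsq hx
  have hl' : l⁻¹ ∈ Λ := by rw [← hinv]; exact Set.inv_mem_inv.mpr hl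
  -- `f = x l⁻¹ ∈ Λ³ ⊆ M`
  have hfM : f ∈ M := by
    simpa using M.mul_mem (Submonoid.mul_subset hΛM hΛM hx) (hΛM hl')
  exact Set.mul_mem_mul ⟨hf, hfM⟩ hl

lemma exists_biUnion_conj_image_subset_mul {A E Q F₀ : Set G} (hE : E.Finite)
    (hEA : E ⊆ rightAlmostNormalizer A) (hF₀ : F₀.Finite)
    (hQ : ⋃ l ∈ Q, (fun x => l * x * l⁻¹) '' A ⊆ A * F₀) :
    ∃ D : Set G, D.Finite ∧ ⋃ l ∈ E * Q, (fun x => l * x * l⁻¹) '' A ⊆ A * D := by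
  have hEA' : ∀ e ∈ E, ∃ C : Set G, C.Finite ∧ (fun x => e * x * e⁻¹) '' A ⊆ A * C :=
    fun e he => hEA he
  choose! C hC hCA using hEA'
  refine ⟨⋃ e ∈ E, C e * (fun x => e * x * e⁻¹) '' F₀,
    hE.biUnion fun e he => (hC e he).mul (hF₀.image _), ?_⟩
  simp only [Set.iUnion_subset_iff]
  rintro _ ⟨e, he, l, hl, rfl⟩
  rw [conj_mul_image]
  calc _ ⊆ (fun x => e * x * e⁻¹) '' (A * F₀) :=
        Set.image_mono (Set.iUnion₂_subset_iff.mp hQ l hl)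
    _ ⊆ A * (C e * (fun x => e * x * e⁻¹) '' F₀) := conj_image_mul_subset (hCA e he) F₀
    _ ⊆ _ := Set.mul_subset_mul_left
        (Set.subset_biUnion_of_mem (u := fun e => C e * (fun x => e * x * e⁻¹) '' F₀) he)

end

theorem stmt17_general {G : Type*} [Group G] (Λ ΛN : Set G)
    (hΛ : IsApproxSubgroup Λ)
    (hunion : SetCommensurable (⋃ l ∈ Λ, (fun x => l * x * l⁻¹) '' ΛN) ΛN) :
    ∀ k : ℕ, 1 ≤ k →
      SetCommensurable (⋃ l ∈ Λ ^ k, (fun x => l * x * l⁻¹) '' ΛN) ΛN := by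
  intro k hk
  obtain ⟨F₀, hF₀, hunion⟩ := hunion.exists_subset_mul
  have hΛN : Λ ⊆ rightAlmostNormalizer ΛN := fun l hl =>
    ⟨F₀, hF₀, Set.iUnion₂_subset_iff.mp hunion l hl⟩
  obtain ⟨F, hF, hFN, hsq⟩ := hΛ.exists_finite_sq_subset_mul hΛN
  obtain ⟨D, hD, hUD⟩ := exists_biUnion_conj_image_subset_mul (hF.pow (k - 1))
    (Submonoid.pow_subset hFN) hF₀ hunion
  have hpow := Set.pow_subset_pow_mul_of_sq_subset_mul hsq (n := k) (by omega)
  refine setCommensurable_of_subset_of_subset_mul_s17 hD (fun n hn => ?_)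
    ((Set.biUnion_subset_biUnion_left hpow).trans hUD)
  exact Set.mem_biUnion (Set.one_mem_pow hΛ.1) ⟨n, hn, by simp⟩

theorem stmt17 {G : Type*} [Group G] (Λ ΛN : Set G)
    (hΛ : IsApproxSubgroup Λ) (hΛN : IsApproxSubgroup ΛN)
    (hconj : ∀ l ∈ Λ, SetCommensurable ((fun x => l * x * l⁻¹) '' ΛN) ΛN)
    (hunion : SetCommensurable (⋃ l ∈ Λ, (fun x => l * x * l⁻¹) '' ΛN) ΛN) :
    ∀ k : ℕ, 1 ≤ k →
      SetCommensurable (⋃ l ∈ Λ ^ k, (fun x => l * x * l⁻¹) '' ΛN) ΛN :=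
  stmt17_general Λ ΛN hΛ hunion
end
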